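/- arXiv:2405.11434 — 9 statements merged into one kernel-verified Lean document; each statement's English description precedes it below -/
import Mathlib

section
/- Inner continuity of chronological pasts: for every point p of M and every compact set K contained in I⁻(p), there exists an open neighborhood U of p such that K ⊆ I⁻(q) for every q ∈ U. -/
/-- Inner continuity of chronological pasts: if `≪` is transitive, each
`I⁺(w)` and `I⁻(w)` is open, and the interpolation property holds
(`x ≪ p` implies there is `w` with `x ≪ w ≪ p`), then for every `p` and every
compact `K ⊆ I⁻(p)` there is an open neighborhood `U` of `p` such that
`K ⊆ I⁻(q)` for every `q ∈ U`. -/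
theorem chronological_past_inner_continuous {M : Type*} [TopologicalSpace M]
    (lt : M → M → Prop)
    (htrans : ∀ x y z, lt x y → lt y z → lt x z)
    (hopen_plus : ∀ w : M, IsOpen {q : M | lt w q})
    (hopen_minus : ∀ w : M, IsOpen {q : M | lt q w})
    (hdense : ∀ x p : M, lt x p → ∃ w : M, lt x w ∧ lt w p)
    (p : M) (K : Set M) (hK : IsCompact K) (hKsub : K ⊆ {q : M | lt q p}) :
    ∃ U : Set M, IsOpen U ∧ p ∈ U ∧ ∀ q ∈ U, K ⊆ {r : M | lt r q} := by
  choose w hw1 hw2 using fun x : K => hdense x p (hKsub x.2)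
  obtain ⟨t, ht⟩ := hK.elim_finite_subcover (fun x : K => {r : M | lt r (w x)})
    (fun x => hopen_minus (w x))
    (fun x hx => Set.mem_iUnion.2 ⟨⟨x, hx⟩, hw1 ⟨x, hx⟩⟩)
  refine ⟨⋂ i ∈ t, {q : M | lt (w i) q}, ?_, ?_, ?_⟩
  · exact isOpen_biInter_finset fun i _ => hopen_plus (w i)
  · exact Set.mem_iInter₂.2 fun i _ => hw2 i
  · intro q hq r hr
    obtain ⟨i, hi, hri⟩ := Set.mem_iUnion₂.1 (ht hr)
    exact htrans _ _ _ hri (Set.mem_iInter₂.1 hq i hi)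
end

section
/- If for all points p the causal futures J⁺(p) and causal pasts J⁻(p) are closed and the chronological futures/pasts I⁺, I⁻ are outer continuous, then the causal order ≤ is quasi-closed: whenever xₙ → x, yₙ → y, and xₙ ≪ yₙ for all n, one has x ≤ y. -/
/-- If the causal futures/pasts are closed (indeed `J⁺(p) = closure (I⁺(p))` and
`J⁻(p) = closure (I⁻(p))`) and the chronological futures/pasts are outer
continuous, then the causal order `≤` is quasi-closed: `xₙ → x`, `yₙ → y` and
`xₙ ≪ yₙ` for all `n` imply `x ≤ y`. -/
theorem conal_order_quasi_closed {M : Type*} [TopologicalSpace M] [LocallyCompactSpace M]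
    (le lt : M → M → Prop)
    (hrefl : ∀ x, le x x) (hletrans : ∀ x y z, le x y → le y z → le x z)
    (hlttrans : ∀ x y z, lt x y → lt y z → lt x z)
    (hsub : ∀ x y, lt x y → le x y)
    (hltopen : ∀ x y, lt x y → ∃ U V : Set M, IsOpen U ∧ IsOpen V ∧ x ∈ U ∧ y ∈ V ∧
      ∀ u ∈ U, ∀ v ∈ V, lt u v)
    (hJplus : ∀ p : M, {q : M | le p q} = closure {q : M | lt p q})
    (hJminus : ∀ p : M, {q : M | le q p} = closure {q : M | lt q p})
    (houter_plus : ∀ p : M, ∀ K : Set M, IsCompact K →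
      K ⊆ (closure {q : M | lt p q})ᶜ →
      ∃ U ∈ nhds p, ∀ q ∈ U, K ⊆ (closure {r : M | lt q r})ᶜ)
    (houter_minus : ∀ p : M, ∀ K : Set M, IsCompact K →
      K ⊆ (closure {q : M | lt q p})ᶜ →
      ∃ U ∈ nhds p, ∀ q ∈ U, K ⊆ (closure {r : M | lt r q})ᶜ)
    (x y : M) (xs ys : ℕ → M)
    (hx : Filter.Tendsto xs Filter.atTop (nhds x))
    (hy : Filter.Tendsto ys Filter.atTop (nhds y))
    (hlt : ∀ n, lt (xs n) (ys n)) :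
    le x y := by
  by_contra hxy
  -- y is not in closure of I⁺(x)
  have hyc : y ∈ (closure {q : M | lt x q})ᶜ := by
    intro hmem
    exact hxy ((hJplus x ▸ hmem : y ∈ {q : M | le x q}))
  have hopen : IsOpen (closure {q : M | lt x q})ᶜ := isClosed_closure.isOpen_compl
  obtain ⟨K, hKn, hKsub, hKcomp⟩ := local_compact_nhds (hopen.mem_nhds hyc)
  obtain ⟨U, hU, hUprop⟩ := houter_plus x K hKcomp hKsub
  have h1 : ∀ᶠ n in Filter.atTop, xs n ∈ U := hx hU
  have h2 : ∀ᶠ n in Filter.atTop, ys n ∈ K := hy hKn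
  obtain ⟨n, hn1, hn2⟩ := (h1.and h2).exists
  exact hUprop (xs n) hn1 hn2 (subset_closure (hlt n))
end

section
/- Suppose that for all p, q in M: I⁺(p) ⊆ I⁺(q) if and only if I⁻(q) ⊆ I⁻(p) (reflectivity). Then for every point p, the chronological past I⁻(p) is outer continuous: for every compact set K ⊆ M \ closure(I⁻(p)) there is a neighborhood U of p such that K ⊆ M \ closure(I⁻(u)) for all u ∈ U. -/
/-- Reflectivity implies outer continuity of chronological pasts: if for all `p, q`
one has `I⁺(p) ⊆ I⁺(q) ↔ I⁻(q) ⊆ I⁻(p)`, then for every `p` the chronological past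
`I⁻(p)` is outer continuous: for every compact `K ⊆ M \ closure (I⁻(p))` there is a
neighborhood `U` of `p` such that `K ⊆ M \ closure (I⁻(u))` for all `u ∈ U`. -/
theorem chronological_past_outer_continuous {M : Type*} [TopologicalSpace M]
    [LocallyCompactSpace M] [T2Space M]
    (lt : M → M → Prop)
    (htrans : ∀ x y z, lt x y → lt y z → lt x z)
    (hopen_plus : ∀ w : M, IsOpen {q : M | lt w q})
    (hopen_minus : ∀ w : M, IsOpen {q : M | lt q w})
    (hdense : ∀ x y : M, lt x y → ∃ w : M, lt x w ∧ lt w y)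
    (hclplus : ∀ p : M, closure {q : M | lt p q} =
      {q : M | {r : M | lt q r} ⊆ {r : M | lt p r}})
    (hclminus : ∀ p : M, closure {q : M | lt q p} =
      {q : M | {r : M | lt r q} ⊆ {r : M | lt r p}})
    (hdual : ∀ p v : M, p ∈ closure {q : M | lt v q} ↔ v ∈ closure {q : M | lt q p})
    (hreflect : ∀ p q : M,
      {r : M | lt p r} ⊆ {r : M | lt q r} ↔ {r : M | lt r q} ⊆ {r : M | lt r p})
    (p : M) (K : Set M) (hK : IsCompact K)
    (hKsub : K ⊆ (closure {q : M | lt q p})ᶜ) :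
    ∃ U ∈ nhds p, ∀ u ∈ U, K ⊆ (closure {q : M | lt q u})ᶜ := by
  have key : ∀ k ∈ K, ∃ w : M, lt w k ∧ p ∉ closure {q : M | lt w q} := by
    intro k hk
    have hk' := hKsub hk
    rw [Set.mem_compl_iff, hclminus] at hk'
    simp only [Set.mem_setOf_eq, Set.subset_def, not_forall] at hk'
    obtain ⟨r, hrk, hrp⟩ := hk'
    obtain ⟨w, hrw, hwk⟩ := hdense r k hrk
    refine ⟨w, hwk, fun hp => ?_⟩
    rw [hdual, hclminus] at hp
    exact hrp (hp hrw)
  choose! w hw1 hw2 using key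
  obtain ⟨t, htK, ht⟩ := hK.elim_nhds_subcover (fun k => {q : M | lt (w k) q})
    (fun k hk => (hopen_plus (w k)).mem_nhds (hw1 k hk))
  refine ⟨⋂ k ∈ t, (closure {q : M | lt (w k) q})ᶜ, ?_, ?_⟩
  · exact (Filter.biInter_finset_mem t).mpr fun k hk =>
      ((isClosed_closure).isOpen_compl).mem_nhds (hw2 k (htK k hk))
  · intro u hu q hq
    obtain ⟨k, hkt, hqk⟩ := Set.mem_iUnion₂.mp (ht hq)
    simp only [Set.mem_setOf_eq] at hqk
    intro hqcl
    rw [hclminus] at hqcl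
    have hwu : lt (w k) u := hqcl hqk
    have : u ∈ closure {q : M | lt (w k) q} := subset_closure hwu
    exact (Set.mem_iInter₂.mp hu k hkt) this
end

section
/- Nonordering of omega-limit sets: under the hypotheses of a strongly monotone semiflow on a partially ordered metric space with quasi-closed order and open strict relation, an omega-limit set ω(z) of a point with precompact orbit cannot contain two distinct points x, y with x ≤ y. -/
open Filter Topology Set

/-- Dirichlet-type approximation: multiples of `σ` come arbitrarily close to
`p * τ + (τ - σ)` for natural `p`. -/
lemma dirichlet_aux (σ τ δ : ℝ) (hσ : 0 < σ) (hστ : σ < τ) (hδ : 0 < δ)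
    (hδσ : δ ≤ σ) :
    ∃ (k p : ℕ), 1 ≤ k ∧ |(k : ℝ) * σ - ((p : ℝ) * τ + (τ - σ))| < δ := by
  have hτ : 0 < τ := hσ.trans hστ
  set n : ℕ := ⌈τ / δ⌉₊ with hn
  have hnpos : 0 < n := Nat.ceil_pos.mpr (div_pos hτ hδ)
  obtain ⟨j, k, hk0, hkn, hjk⟩ := Real.exists_int_int_abs_mul_sub_le (2 * σ / τ) hnpos
  have hτn : τ / ((n : ℝ) + 1) < δ := by
    rw [div_lt_iff₀ (by positivity)]
    have h1 : τ / δ < (n : ℝ) + 1 := lt_of_le_of_lt (Nat.le_ceil _) (by linarith)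
    calc τ = (τ / δ) * δ := by field_simp
    _ < ((n : ℝ) + 1) * δ := by
        exact mul_lt_mul_of_pos_right h1 hδ
    _ = δ * ((n : ℝ) + 1) := by ring
  have key : |2 * (k : ℝ) * σ - (j : ℝ) * τ| < δ := by
    have h2 : |(k : ℝ) * (2 * σ / τ) - (j : ℝ)| * τ ≤ (1 / ((n : ℝ) + 1)) * τ :=
      mul_le_mul_of_nonneg_right hjk hτ.le
    have h3 : |(k : ℝ) * (2 * σ / τ) - (j : ℝ)| * τ = |2 * (k : ℝ) * σ - (j : ℝ) * τ| := by
      have he : ((k : ℝ) * (2 * σ / τ) - (j : ℝ)) * τ = 2 * (k : ℝ) * σ - (j : ℝ) * τ := by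
        field_simp
      rw [← he, abs_mul, abs_of_pos hτ]
    rw [h3] at h2
    calc |2 * (k : ℝ) * σ - (j : ℝ) * τ| ≤ (1 / ((n : ℝ) + 1)) * τ := h2
    _ = τ / ((n : ℝ) + 1) := by ring
    _ < δ := hτn
  have hk1 : (1 : ℝ) ≤ (k : ℝ) := by exact_mod_cast hk0
  have hj1 : 1 ≤ j := by
    by_contra h
    push_neg at h
    have hj0 : (j : ℝ) ≤ 0 := by exact_mod_cast (by omega : j ≤ 0)
    have h2σ : 2 * σ ≤ 2 * (k : ℝ) * σ := by nlinarith
    have : 2 * (k : ℝ) * σ - (j : ℝ) * τ ≥ 2 * σ := by nlinarith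
    have := le_abs_self (2 * (k : ℝ) * σ - (j : ℝ) * τ)
    nlinarith
  refine ⟨(2 * k - 1).toNat, (j - 1).toNat, ?_, ?_⟩
  · omega
  · have h1 : ((2 * k - 1).toNat : ℝ) = 2 * (k : ℝ) - 1 := by
      have h := Int.toNat_of_nonneg (by omega : (0:ℤ) ≤ 2 * k - 1)
      exact_mod_cast congrArg (fun i : ℤ => (i : ℝ)) h
    have h2 : ((j - 1).toNat : ℝ) = (j : ℝ) - 1 := by
      have h := Int.toNat_of_nonneg (by omega : (0:ℤ) ≤ j - 1)
      exact_mod_cast congrArg (fun i : ℤ => (i : ℝ)) h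
    rw [h1, h2]
    have : (2 * (k:ℝ) - 1) * σ - (((j:ℝ) - 1) * τ + (τ - σ)) = 2 * (k:ℝ) * σ - (j:ℝ) * τ := by ring
    rw [this]
    exact key

/-- Nonordering of omega-limit sets: for a continuous strongly order-preserving
semiflow on a complete metric space with a quasi-closed partial order and open
strict relation, the omega-limit set of a point with precompact forward orbit
cannot contain two distinct points `a ≤ b`. -/
theorem omega_limit_nonordered {M : Type*} [MetricSpace M] [CompleteSpace M]
    (φ : ℝ → M → M)
    (hcont : Continuous fun p : ℝ × M => φ p.1 p.2)
    (hφ0 : ∀ x, φ 0 x = x)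
    (hφadd : ∀ s t : ℝ, 0 ≤ s → 0 ≤ t → ∀ x, φ (s + t) x = φ s (φ t x))
    (le lt : M → M → Prop)
    (hrefl : ∀ x, le x x) (hletrans : ∀ x y z, le x y → le y z → le x z)
    (hantisymm : ∀ x y, le x y → le y x → x = y)
    (hsub : ∀ x y, lt x y → le x y)
    (hlttrans : ∀ x y z, lt x y → lt y z → lt x z)
    (hltopen : ∀ x y, lt x y → ∃ U V : Set M, IsOpen U ∧ IsOpen V ∧ x ∈ U ∧ y ∈ V ∧
      ∀ u ∈ U, ∀ v ∈ V, lt u v)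
    (hmono : ∀ x y, le x y → x ≠ y → ∀ t : ℝ, 0 < t → lt (φ t x) (φ t y))
    (hqc : ∀ (xs ys : ℕ → M) (a b : M), Filter.Tendsto xs Filter.atTop (nhds a) →
      Filter.Tendsto ys Filter.atTop (nhds b) → (∀ n, lt (xs n) (ys n)) → le a b)
    (z : M)
    (horb : IsCompact (closure {y : M | ∃ t : ℝ, 0 ≤ t ∧ y = φ t z}))
    (a b : M)
    (ha : a ∈ ⋂ s ∈ {s : ℝ | 0 ≤ s}, closure {y : M | ∃ t : ℝ, s ≤ t ∧ y = φ t z})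
    (hb : b ∈ ⋂ s ∈ {s : ℝ | 0 ≤ s}, closure {y : M | ∃ t : ℝ, s ≤ t ∧ y = φ t z})
    (hab : le a b) : a = b := by
  by_contra hne
  -- continuity in each variable
  have hc1 : ∀ t : ℝ, Continuous fun x : M => φ t x :=
    fun t => hcont.comp (Continuous.prodMk_right t)
  have hc2 : ∀ x : M, Continuous fun t : ℝ => φ t x :=
    fun x => hcont.comp (continuous_id.prodMk continuous_const)
  have hcomm : ∀ s t : ℝ, 0 ≤ s → 0 ≤ t → ∀ x, φ s (φ t x) = φ t (φ s x) := by
    intro s t hs ht x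
    rw [← hφadd s t hs ht, ← hφadd t s ht hs, add_comm]
  have hlepres : ∀ t : ℝ, 0 ≤ t → ∀ x y, le x y → le (φ t x) (φ t y) := by
    intro t ht x y h
    rcases eq_or_lt_of_le ht with h0 | h0
    · rw [← h0, hφ0, hφ0]; exact h
    · by_cases hxy : x = y
      · rw [hxy]; exact hrefl _
      · exact hsub _ _ (hmono x y h hxy t h0)
  have hmem : ∀ c : M,
      (c ∈ ⋂ s ∈ {s : ℝ | 0 ≤ s}, closure {y : M | ∃ t : ℝ, s ≤ t ∧ y = φ t z}) →
      ∀ s : ℝ, 0 ≤ s → c ∈ closure {y : M | ∃ t : ℝ, s ≤ t ∧ y = φ t z} := by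
    intro c hc s hs
    exact Set.mem_iInter₂.mp hc s hs
  -- extract sequences converging to omega-limit points
  have hseq : ∀ c : M, (∀ s : ℝ, 0 ≤ s → c ∈ closure {y : M | ∃ t : ℝ, s ≤ t ∧ y = φ t z}) →
      ∃ t : ℕ → ℝ, (∀ k : ℕ, (k : ℝ) ≤ t k) ∧ Tendsto (fun k => φ (t k) z) atTop (𝓝 c) := by
    intro c hc
    have H : ∀ k : ℕ, ∃ t : ℝ, (k : ℝ) ≤ t ∧ dist c (φ t z) < 1 / (k + 1) := by
      intro k
      have h1 := hc (k : ℝ) (Nat.cast_nonneg k)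
      rw [Metric.mem_closure_iff] at h1
      obtain ⟨y, hy, hdy⟩ := h1 (1 / (k + 1)) (by positivity)
      obtain ⟨t, htk, rfl⟩ := hy
      exact ⟨t, htk, hdy⟩
    choose t ht1 ht2 using H
    refine ⟨t, ht1, ?_⟩
    rw [tendsto_iff_dist_tendsto_zero]
    refine squeeze_zero (fun k => dist_nonneg) (fun k => ?_)
      tendsto_one_div_add_atTop_nhds_zero_nat
    rw [dist_comm]
    exact (ht2 k).le
  obtain ⟨ta, hta1, hta2⟩ := hseq a (hmem a ha)
  obtain ⟨tb, htb1, htb2⟩ := hseq b (hmem b hb)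
  -- invariance of tail closures under the flow
  have hinv : ∀ (c : M) (tc : ℕ → ℝ), (∀ k : ℕ, (k : ℝ) ≤ tc k) →
      Tendsto (fun k => φ (tc k) z) atTop (𝓝 c) →
      ∀ r : ℝ, 0 ≤ r → ∀ s : ℝ, φ r c ∈ closure {y : M | ∃ t : ℝ, s ≤ t ∧ y = φ t z} := by
    intro c tc htc1 htc2 r hr s
    have h1 : Tendsto (fun k => φ r (φ (tc k) z)) atTop (𝓝 (φ r c)) :=
      ((hc1 r).tendsto c).comp htc2
    refine mem_closure_of_tendsto h1 ?_
    filter_upwards [eventually_ge_atTop ⌈s⌉₊] with k hk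
    have htck0 : (0:ℝ) ≤ tc k := le_trans (Nat.cast_nonneg k) (htc1 k)
    refine ⟨r + tc k, ?_, (hφadd r (tc k) hr htck0 z).symm⟩
    have hsk : s ≤ (k : ℝ) := le_trans (Nat.le_ceil s) (Nat.cast_le.mpr hk)
    linarith [htc1 k]
  -- get a strict pair along the orbit
  obtain ⟨U, V, hU, hV, huU, hvV, hUV⟩ := hltopen _ _ (hmono a b hab hne 1 one_pos)
  have h1a : φ 1 a ∈ closure {y : M | ∃ t : ℝ, (0:ℝ) ≤ t ∧ y = φ t z} :=
    hinv a ta hta1 hta2 1 zero_le_one 0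
  obtain ⟨y1, hy1U, hy1S⟩ := (_root_.mem_closure_iff.mp h1a) U hU huU
  obtain ⟨s1, hs1, rfl⟩ := hy1S
  have h1b : φ 1 b ∈ closure {y : M | ∃ t : ℝ, (s1 + 1) ≤ t ∧ y = φ t z} :=
    hinv b tb htb1 htb2 1 zero_le_one (s1 + 1)
  obtain ⟨y2, hy2V, hy2S⟩ := (_root_.mem_closure_iff.mp h1b) V hV hvV
  obtain ⟨s2, hs2, rfl⟩ := hy2S
  set τ : ℝ := s2 - s1 with hτdef
  have hτ : 0 < τ := by simp only [hτdef]; linarith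
  set x : M := φ s1 z with hxdef
  have hxz : ∀ u : ℝ, 0 ≤ u → φ u x = φ (u + s1) z :=
    fun u hu => (hφadd u s1 hu hs1 z).symm
  have hlt0 : lt x (φ τ x) := by
    have hx2 : φ τ x = φ s2 z := by
      rw [hxz τ hτ.le]
      congr 1
      simp only [hτdef]; ring
    rw [hx2]
    exact hUV _ hy1U _ hy2V
  set X : ℕ → M := fun n => φ (n * τ) x with hXdef
  have hX0 : X 0 = x := by simp only [hXdef, Nat.cast_zero, zero_mul, hφ0]
  have hXnτ : ∀ n : ℕ, (0:ℝ) ≤ (n : ℝ) * τ := fun n => mul_nonneg (Nat.cast_nonneg n) hτ.le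
  have hXsucc : ∀ n : ℕ, X (n + 1) = φ τ (X n) := by
    intro n
    show φ (((n+1 : ℕ) : ℝ) * τ) x = φ τ (φ ((n : ℝ) * τ) x)
    rw [← hφadd τ ((n : ℝ) * τ) hτ.le (hXnτ n)]
    congr 1
    push_cast
    ring
  have hXorb : ∀ n, X n ∈ closure {y : M | ∃ t : ℝ, 0 ≤ t ∧ y = φ t z} := by
    intro n
    apply subset_closure
    exact ⟨(n : ℝ) * τ + s1, add_nonneg (hXnτ n) hs1, hxz _ (hXnτ n)⟩
  have hXle1 : ∀ n, le (X n) (X (n + 1)) := by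
    intro n
    have h := hlepres ((n : ℝ) * τ) (hXnτ n) x (φ τ x) (hsub _ _ hlt0)
    rw [hXsucc n]
    rw [hcomm τ ((n : ℝ) * τ) hτ.le (hXnτ n) x]
    exact h
  have hXle : ∀ n m : ℕ, n ≤ m → le (X n) (X m) := by
    intro n m hnm
    induction m with
    | zero =>
      have : n = 0 := Nat.le_zero.mp hnm
      rw [this]; exact hrefl _
    | succ m ih =>
      rcases eq_or_lt_of_le hnm with h | h
      · rw [h]; exact hrefl _
      · exact hletrans _ _ _ (ih (Nat.lt_succ_iff.mp h)) (hXle1 m)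
  -- limit of the discrete orbit
  have hE : ∃ e : M, Tendsto X atTop (𝓝 e) ∧ φ τ e = e := by
    by_cases hcase : ∃ n : ℕ, X n = X (n + 1)
    · obtain ⟨n0, h0⟩ := hcase
      have hconst : ∀ m, m ≥ n0 → X m = X n0 := by
        intro m hm
        induction m with
        | zero =>
          have : n0 = 0 := Nat.le_zero.mp hm
          rw [this]
        | succ m ih =>
          rcases Nat.lt_or_ge n0 (m + 1) with h | h
          · have hm' : n0 ≤ m := Nat.lt_succ_iff.mp h
            rw [hXsucc m, ih hm', ← hXsucc n0]
            exact h0.symm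
          · have : n0 = m + 1 := le_antisymm hm h
            rw [this]
      refine ⟨X n0, tendsto_atTop_of_eventually_const hconst, ?_⟩
      rw [← hXsucc n0]
      exact h0.symm
    · push_neg at hcase
      have hXlt1 : ∀ n, lt (X n) (X (n + 1)) := by
        intro n
        cases n with
        | zero =>
          rw [hXsucc 0, hX0]
          exact hlt0
        | succ n =>
          have h01 : le (X 0) (X 1) := hXle1 0
          have hne01 : X 0 ≠ X 1 := hcase 0
          have h := hmono (X 0) (X 1) h01 hne01 (((n+1 : ℕ) : ℝ) * τ)
            (mul_pos (by exact_mod_cast Nat.succ_pos n) hτ)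
          have e1 : φ (((n+1 : ℕ) : ℝ) * τ) (X 0) = X (n + 1) := by
            rw [hX0]
          have e2 : φ (((n+1 : ℕ) : ℝ) * τ) (X 1) = X (n + 2) := by
            show φ (((n+1 : ℕ) : ℝ) * τ) (φ (((1:ℕ) : ℝ) * τ) x) = φ (((n+2 : ℕ) : ℝ) * τ) x
            rw [← hφadd (((n+1 : ℕ) : ℝ) * τ) (((1:ℕ) : ℝ) * τ) (hXnτ (n+1)) (hXnτ 1)]
            congr 1
            push_cast
            ring
          rw [e1, e2] at h
          exact h
      have hXltm : ∀ n m : ℕ, n < m → lt (X n) (X m) := by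
        intro n m hnm
        induction m with
        | zero => exact absurd hnm (Nat.not_lt_zero n)
        | succ m ih =>
          rcases Nat.lt_or_ge n m with h | h
          · exact hlttrans _ _ _ (ih h) (hXlt1 m)
          · have : n = m := le_antisymm (Nat.lt_succ_iff.mp hnm) h
            rw [this]
            exact hXlt1 m
      obtain ⟨e, _, g, hg, hge⟩ := horb.tendsto_subseq hXorb
      have huniq : ∀ (p : M) (u : ℕ → ℕ), Tendsto u atTop atTop →
          Tendsto (fun k => X (u k)) atTop (𝓝 p) → p = e := by
        intro p u hu hup
        have hle1 : le p e := by
          refine hqc (fun k => X (u k)) (fun k => X (g (u k + 1))) p e hup ?_ ?_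
          · exact hge.comp ((tendsto_add_atTop_nat 1).comp hu)
          · intro k
            exact hXltm _ _ (lt_of_lt_of_le (Nat.lt_succ_self _) hg.le_apply)
        have hle2 : le e p := by
          have hJ : ∀ k : ℕ, ∃ J : ℕ, k ≤ J ∧ g k < u J := by
            intro k
            obtain ⟨J, hJ1, hJ2⟩ :=
              ((eventually_ge_atTop k).and (hu.eventually (eventually_gt_atTop (g k)))).exists
            exact ⟨J, hJ1, hJ2⟩
          choose J hJ1 hJ2 using hJ
          refine hqc (fun k => X (g k)) (fun k => X (u (J k))) e p hge ?_
            (fun k => hXltm _ _ (hJ2 k))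
          exact hup.comp (tendsto_atTop_mono hJ1 tendsto_id)
        exact hantisymm _ _ hle1 hle2
      have hXe : Tendsto X atTop (𝓝 e) := by
        apply tendsto_of_subseq_tendsto
        intro ns hns
        obtain ⟨p, _, ms, hms, hmsp⟩ := horb.tendsto_subseq (fun n => hXorb (ns n))
        refine ⟨ms, ?_⟩
        have hpe : p = e := huniq p (ns ∘ ms) (hns.comp hms.tendsto_atTop) hmsp
        rw [← hpe]
        exact hmsp
      refine ⟨e, hXe, ?_⟩
      have h1 : Tendsto (fun n => X (n + 1)) atTop (𝓝 e) := hXe.comp (tendsto_add_atTop_nat 1)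
      have h2 : Tendsto (fun n => φ τ (X n)) atTop (𝓝 (φ τ e)) := ((hc1 τ).tendsto e).comp hXe
      have h3 : (fun n => X (n + 1)) = fun n => φ τ (X n) := funext hXsucc
      rw [h3] at h1
      exact tendsto_nhds_unique h2 h1
  obtain ⟨e, hXe, heτ⟩ := hE
  -- every omega-limit point lies on the orbit of e
  have hrep : ∀ (c : M) (tc : ℕ → ℝ), (∀ k : ℕ, (k : ℝ) ≤ tc k) →
      Tendsto (fun k => φ (tc k) z) atTop (𝓝 c) →
      ∃ r : ℝ, 0 ≤ r ∧ r ≤ τ ∧ c = φ r e := by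
    intro c tc htc1 htc2
    set K0 : ℕ := ⌈s1⌉₊ with hK0
    set u : ℕ → ℝ := fun k => tc (k + K0) - s1 with hu
    have hu0 : ∀ k : ℕ, (k : ℝ) ≤ u k := by
      intro k
      have h1 := htc1 (k + K0)
      have h2 : s1 ≤ (K0 : ℝ) := Nat.le_ceil s1
      have h3 : ((k + K0 : ℕ) : ℝ) = (k : ℝ) + (K0 : ℝ) := by push_cast; ring
      simp only [hu]
      rw [h3] at h1
      linarith
    have hupos : ∀ k, (0:ℝ) ≤ u k := fun k => le_trans (Nat.cast_nonneg k) (hu0 k)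
    set n : ℕ → ℕ := fun k => ⌊u k / τ⌋₊ with hn
    set r : ℕ → ℝ := fun k => u k - (n k : ℝ) * τ with hr
    have hrlow : ∀ k, 0 ≤ r k := by
      intro k
      have h1 : ((n k : ℕ) : ℝ) ≤ u k / τ := Nat.floor_le (div_nonneg (hupos k) hτ.le)
      have h2 : (n k : ℝ) * τ ≤ u k := by
        rw [← le_div_iff₀ hτ]
        exact h1
      simp only [hr]
      linarith
    have hrhigh : ∀ k, r k < τ := by
      intro k
      have h1 : u k / τ < (n k : ℝ) + 1 := Nat.lt_floor_add_one (u k / τ)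
      have h2 : u k < ((n k : ℝ) + 1) * τ := by
        rw [← div_lt_iff₀ hτ]
        exact h1
      simp only [hr]
      nlinarith
    have hphi : ∀ k, φ (tc (k + K0)) z = φ (r k) (X (n k)) := by
      intro k
      have h1 : φ (tc (k + K0)) z = φ (u k) x := by
        rw [hxz (u k) (hupos k)]
        congr 1
        simp only [hu]
        ring
      rw [h1]
      have h2 : u k = r k + (n k : ℝ) * τ := by simp only [hr]; ring
      rw [h2, hφadd (r k) ((n k : ℝ) * τ) (hrlow k) (hXnτ (n k)) x]
    have hrIcc : ∀ k, r k ∈ Set.Icc (0:ℝ) τ := fun k => ⟨hrlow k, (hrhigh k).le⟩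
    obtain ⟨rI, hrI, ψ, hψ, hrψ⟩ := (isCompact_Icc).tendsto_subseq hrIcc
    have hnatTop : Tendsto n atTop atTop := by
      rw [tendsto_atTop_atTop]
      intro N
      refine ⟨⌈τ * ((N : ℝ) + 1)⌉₊, fun k hk => ?_⟩
      apply Nat.le_floor
      rw [le_div_iff₀ hτ]
      have h1 : τ * ((N : ℝ) + 1) ≤ (⌈τ * ((N : ℝ) + 1)⌉₊ : ℝ) := Nat.le_ceil _
      have h2 : ((⌈τ * ((N : ℝ) + 1)⌉₊ : ℕ) : ℝ) ≤ (k : ℝ) := Nat.cast_le.mpr hk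
      have h3 := hu0 k
      nlinarith
    have hXnψ : Tendsto (fun j => X (n (ψ j))) atTop (𝓝 e) :=
      hXe.comp (hnatTop.comp hψ.tendsto_atTop)
    have hprod : Tendsto (fun j => φ (r (ψ j)) (X (n (ψ j)))) atTop (𝓝 (φ rI e)) := by
      have hpr : Tendsto (fun j => (r (ψ j), X (n (ψ j)))) atTop (𝓝 (rI, e)) :=
        hrψ.prodMk_nhds hXnψ
      exact (hcont.tendsto (rI, e)).comp hpr
    have hcψ : Tendsto (fun j => φ (tc (ψ j + K0)) z) atTop (𝓝 c) :=
      htc2.comp ((tendsto_add_atTop_nat K0).comp hψ.tendsto_atTop)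
    have heq2 : (fun j => φ (tc (ψ j + K0)) z) = fun j => φ (r (ψ j)) (X (n (ψ j))) :=
      funext fun j => hphi (ψ j)
    rw [heq2] at hcψ
    exact ⟨rI, hrI.1, hrI.2, tendsto_nhds_unique hcψ hprod⟩
  obtain ⟨ra, hra0, hraτ, hae⟩ := hrep a ta hta1 hta2
  obtain ⟨rb, hrb0, hrbτ, hbe⟩ := hrep b tb htb1 htb2
  -- periodicity
  have hpa : φ τ a = a := by
    rw [hae, ← hφadd τ ra hτ.le hra0, add_comm, hφadd ra τ hra0 hτ.le, heτ]
  have hpb : φ τ b = b := by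
    rw [hbe, ← hφadd τ rb hτ.le hrb0, add_comm, hφadd rb τ hrb0 hτ.le, heτ]
  -- the phase shift σ
  obtain ⟨σ, hσ0, hστle, hbσ⟩ : ∃ σ : ℝ, 0 ≤ σ ∧ σ ≤ τ ∧ b = φ σ a := by
    rcases le_total ra rb with h | h
    · refine ⟨rb - ra, by linarith, by linarith, ?_⟩
      rw [hae, hbe, ← hφadd (rb - ra) ra (by linarith) hra0]
      congr 1
      ring
    · refine ⟨rb + τ - ra, by linarith, by linarith, ?_⟩
      rw [hae, ← hφadd (rb + τ - ra) ra (by linarith) hra0]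
      have h1 : rb + τ - ra + ra = rb + τ := by ring
      rw [h1, hφadd rb τ hrb0 hτ.le, heτ]
      exact hbe
  have hσpos : 0 < σ := by
    rcases eq_or_lt_of_le hσ0 with h | h
    · exfalso
      have hba : b = a := by rw [hbσ, ← h, hφ0]
      exact hne hba.symm
    · exact h
  have hσlt : σ < τ := by
    rcases lt_or_eq_of_le hστle with h | h
    · exact h
    · exfalso
      have hba : b = a := by rw [hbσ, h, hpa]
      exact hne hba.symm
  -- periodicity lemma for a
  have hper : ∀ w : ℝ, 0 ≤ w → ∀ m : ℕ, φ (w + (m : ℝ) * τ) a = φ w a := by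
    intro w hw m
    induction m with
    | zero => simp [hφ0]
    | succ m ih =>
      have h1 : w + ((m + 1 : ℕ) : ℝ) * τ = (w + (m : ℝ) * τ) + τ := by push_cast; ring
      have h2 : (0:ℝ) ≤ w + (m : ℝ) * τ := add_nonneg hw (mul_nonneg (Nat.cast_nonneg m) hτ.le)
      rw [h1, hφadd (w + (m : ℝ) * τ) τ h2 hτ.le, hpa, ih]
  have hlab : lt a b := by
    have h := hmono a b hab hne τ hτ
    rwa [hpa, hpb] at h
  have hflowper : ∀ w : ℝ, 0 ≤ w → φ τ (φ w a) = φ w a := by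
    intro w hw
    rw [hcomm τ w hτ.le hw, hpa]
  -- L1 : a ≪ φ (k σ) a for k ≥ 1
  have hL1 : ∀ k : ℕ, 1 ≤ k → lt a (φ ((k : ℝ) * σ) a) := by
    intro k hk
    induction k, hk using Nat.le_induction with
    | base =>
      have h1 : ((1 : ℕ) : ℝ) * σ = σ := by norm_num
      rw [h1, ← hbσ]
      exact hlab
    | succ k hk ih =>
      have hk1 : (0:ℝ) ≤ (k : ℝ) * σ := mul_nonneg (Nat.cast_nonneg k) hσ0
      have h1 : le (φ ((k : ℝ) * σ) a) (φ (((k+1 : ℕ) : ℝ) * σ) a) := by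
        have h := hlepres ((k : ℝ) * σ) hk1 a b hab
        rw [hbσ, ← hφadd ((k : ℝ) * σ) σ hk1 hσ0] at h
        have he2 : (k : ℝ) * σ + σ = ((k+1 : ℕ) : ℝ) * σ := by push_cast; ring
        rw [he2] at h
        exact h
      by_cases heq : φ ((k : ℝ) * σ) a = φ (((k+1 : ℕ) : ℝ) * σ) a
      · rw [← heq]
        exact ih
      · have h2 := hmono _ _ h1 heq τ hτ
        rw [hflowper _ hk1, hflowper _ (mul_nonneg (Nat.cast_nonneg (k+1)) hσ0)] at h2
        exact hlttrans _ _ _ ih h2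
  -- L2 : φ (τ - σ) a ≪ a
  have hL2 : lt (φ (τ - σ) a) a := by
    have h := hmono a b hab hne (τ - σ) (by linarith)
    rw [hbσ, ← hφadd (τ - σ) σ (by linarith) hσ0] at h
    have h1 : τ - σ + σ = τ := by ring
    rw [h1, hpa] at h
    exact h
  -- L3 : a ≤ φ (τ - σ) a, by rotation approximation
  have hL3 : le a (φ (τ - σ) a) := by
    have hws : ∀ j : ℕ, ∃ w : ℝ, 0 ≤ w ∧
        |w - (τ - σ)| < min (min σ (τ - σ)) (1 / ((j : ℝ) + 1)) ∧ lt a (φ w a) := by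
      intro j
      set δ : ℝ := min (min σ (τ - σ)) (1 / ((j : ℝ) + 1)) with hδdef
      have hδpos : 0 < δ := lt_min (lt_min hσpos (by linarith)) (by positivity)
      have hδσ : δ ≤ σ := le_trans (min_le_left _ _) (min_le_left _ _)
      have hδτσ : δ ≤ τ - σ := le_trans (min_le_left _ _) (min_le_right _ _)
      obtain ⟨k, p, hk1, hkey⟩ := dirichlet_aux σ τ δ hσpos hσlt hδpos hδσ
      set w : ℝ := (k : ℝ) * σ - (p : ℝ) * τ with hwdef
      have hw1 : |w - (τ - σ)| < δ := by
        have heqw : (k : ℝ) * σ - ((p : ℝ) * τ + (τ - σ)) = w - (τ - σ) := by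
          rw [hwdef]; ring
        rwa [heqw] at hkey
      have hw0 : 0 ≤ w := by
        have h := abs_lt.mp hw1
        linarith [h.1]
      have hwk : φ ((k : ℝ) * σ) a = φ w a := by
        have h1 : (k : ℝ) * σ = w + (p : ℝ) * τ := by rw [hwdef]; ring
        rw [h1, hper w hw0 p]
      refine ⟨w, hw0, hw1, ?_⟩
      rw [← hwk]
      exact hL1 k hk1
    choose w hw0 hw1 hw2 using hws
    have hwlim : Tendsto w atTop (𝓝 (τ - σ)) := by
      rw [tendsto_iff_dist_tendsto_zero]
      refine squeeze_zero (fun j => dist_nonneg) (fun j => ?_)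
        tendsto_one_div_add_atTop_nhds_zero_nat
      rw [Real.dist_eq]
      exact le_trans (hw1 j).le (min_le_right _ _)
    have hφw : Tendsto (fun j => φ (w j) a) atTop (𝓝 (φ (τ - σ) a)) :=
      ((hc2 a).tendsto (τ - σ)).comp hwlim
    exact hqc (fun _ => a) (fun j => φ (w j) a) a (φ (τ - σ) a) tendsto_const_nhds hφw hw2
  -- conclude
  have hfix : φ (τ - σ) a = a := hantisymm _ _ (hsub _ _ hL2) hL3
  apply hne
  have hba : b = a := by
    calc b = φ σ a := hbσ
    _ = φ σ (φ (τ - σ) a) := by rw [hfix]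
    _ = φ (σ + (τ - σ)) a := (hφadd σ (τ - σ) hσ0 (by linarith) a).symm
    _ = φ τ a := by congr 1; ring
    _ = a := hpa
  exact hba.symm
end

section
/- Intersection principle: if x ≤ y, then every point of ω(x) ∩ ω(y) is an equilibrium. -/
/-- Intersection principle: if `x ≤ y`, then every point of `ω(x) ∩ ω(y)` is an
equilibrium (assuming the nonordering property of omega-limit sets and the
colimiting principle). -/
theorem intersection_principle {M : Type*} [MetricSpace M] [CompleteSpace M]
    (φ : ℝ → M → M)
    (hcont : Continuous fun p : ℝ × M => φ p.1 p.2)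
    (hφ0 : ∀ x, φ 0 x = x)
    (hφadd : ∀ s t : ℝ, 0 ≤ s → 0 ≤ t → ∀ x, φ (s + t) x = φ s (φ t x))
    (le lt : M → M → Prop)
    (hrefl : ∀ x, le x x) (hletrans : ∀ x y z, le x y → le y z → le x z)
    (hantisymm : ∀ x y, le x y → le y x → x = y)
    (hsub : ∀ x y, lt x y → le x y)
    (hlttrans : ∀ x y z, lt x y → lt y z → lt x z)
    (hltopen : ∀ x y, lt x y → ∃ U V : Set M, IsOpen U ∧ IsOpen V ∧ x ∈ U ∧ y ∈ V ∧
      ∀ u ∈ U, ∀ v ∈ V, lt u v)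
    (hmono : ∀ x y, le x y → x ≠ y → ∀ t : ℝ, 0 < t → lt (φ t x) (φ t y))
    (hqc : ∀ (xs ys : ℕ → M) (a b : M), Filter.Tendsto xs Filter.atTop (nhds a) →
      Filter.Tendsto ys Filter.atTop (nhds b) → (∀ n, lt (xs n) (ys n)) → le a b)
    -- nonordering of omega-limit sets
    (hnonorder : ∀ z a b : M,
      a ∈ ⋂ s ∈ {s : ℝ | 0 ≤ s}, closure {w : M | ∃ t : ℝ, s ≤ t ∧ w = φ t z} →
      b ∈ ⋂ s ∈ {s : ℝ | 0 ≤ s}, closure {w : M | ∃ t : ℝ, s ≤ t ∧ w = φ t z} →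
      le a b → a = b)
    -- colimiting principle
    (hcolim : ∀ (a b p : M) (tk : ℕ → ℝ), le a b →
      Filter.Tendsto tk Filter.atTop Filter.atTop →
      Filter.Tendsto (fun k => φ (tk k) a) Filter.atTop (nhds p) →
      Filter.Tendsto (fun k => φ (tk k) b) Filter.atTop (nhds p) →
      ∀ t : ℝ, 0 ≤ t → φ t p = p)
    (x y : M) (hxy : le x y)
    (horbx : IsCompact (closure {w : M | ∃ t : ℝ, 0 ≤ t ∧ w = φ t x}))
    (horby : IsCompact (closure {w : M | ∃ t : ℝ, 0 ≤ t ∧ w = φ t y}))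
    (p : M)
    (hpx : p ∈ ⋂ s ∈ {s : ℝ | 0 ≤ s}, closure {w : M | ∃ t : ℝ, s ≤ t ∧ w = φ t x})
    (hpy : p ∈ ⋂ s ∈ {s : ℝ | 0 ≤ s}, closure {w : M | ∃ t : ℝ, s ≤ t ∧ w = φ t y}) :
    ∀ t : ℝ, 0 ≤ t → φ t p = p := by

  -- extract a sequence t n ≥ n+1 with φ (t n) x → p
  have hseq : ∀ n : ℕ, ∃ tn : ℝ, (n : ℝ) + 1 ≤ tn ∧ dist p (φ tn x) < 1 / (n + 1) := by
    intro n
    have hmem := Set.mem_iInter₂.mp hpx ((n : ℝ) + 1)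
      (by positivity : (0:ℝ) ≤ (n : ℝ) + 1)
    have hpos : (0:ℝ) < 1 / (n + 1) := by positivity
    obtain ⟨w, hw, hdw⟩ := Metric.mem_closure_iff.mp hmem _ hpos
    obtain ⟨tn, htn, rfl⟩ := hw
    exact ⟨tn, htn, hdw⟩
  choose t ht1 ht2 using hseq
  have htop : Filter.Tendsto t Filter.atTop Filter.atTop := by
    apply Filter.tendsto_atTop_mono ht1
    exact Filter.tendsto_atTop_add_const_right _ 1 tendsto_natCast_atTop_atTop
  have hxconv : Filter.Tendsto (fun n => φ (t n) x) Filter.atTop (nhds p) := by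
    rw [tendsto_iff_dist_tendsto_zero]
    apply squeeze_zero (fun n => dist_nonneg) (fun n => (dist_comm (φ (t n) x) p ▸ (ht2 n).le))
    exact tendsto_one_div_add_atTop_nhds_zero_nat
  have htnonneg : ∀ n, (0:ℝ) ≤ t n := fun n => le_trans (by positivity) (ht1 n)
  have hinorb : ∀ n, φ (t n) y ∈ closure {w : M | ∃ s : ℝ, 0 ≤ s ∧ w = φ s y} :=
    fun n => subset_closure ⟨t n, htnonneg n, rfl⟩
  obtain ⟨q, hq, σ, hσ, hyconv⟩ := horby.tendsto_subseq hinorb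
  have htopσ : Filter.Tendsto (fun k => t (σ k)) Filter.atTop Filter.atTop :=
    htop.comp hσ.tendsto_atTop
  have hxconvσ : Filter.Tendsto (fun k => φ (t (σ k)) x) Filter.atTop (nhds p) :=
    hxconv.comp hσ.tendsto_atTop
  -- q is in ω(y)
  have hqy : q ∈ ⋂ s ∈ {s : ℝ | 0 ≤ s}, closure {w : M | ∃ r : ℝ, s ≤ r ∧ w = φ r y} := by
    apply Set.mem_iInter₂.mpr
    intro s _
    apply mem_closure_of_tendsto hyconv
    filter_upwards [htopσ.eventually (Filter.eventually_ge_atTop s)] with k hk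
    exact ⟨t (σ k), hk, rfl⟩
  by_cases hne : x = y
  · subst hne
    exact hcolim x x p (fun k => t (σ k)) (hrefl x) htopσ hxconvσ hxconvσ
  · have hpq : le p q := by
      apply hqc (fun k => φ (t (σ k)) x) (fun k => φ (t (σ k)) y) p q hxconvσ hyconv
      intro k
      exact hmono x y hxy hne _ (lt_of_lt_of_le (by positivity) (ht1 (σ k)))
    have : p = q := hnonorder y p q hpy hqy hpq
    subst this
    exact hcolim x y p (fun k => t (σ k)) hxy htopσ hxconvσ hyconv
end

section
/- If x ≤ y, p ∈ ω(x), q ∈ ω(y), p ≪ q, and p is an equilibrium, then ω(x) ≪ ω(y), i.e., a ≪ b for every a ∈ ω(x) and b ∈ ω(y). -/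
/-!
Since `p` is an equilibrium and `p ≪ φ_{t₀} y` for some `t₀`, strong monotonicity keeps
`p ≪ φ_t y` for all later `t`, so `p ≤ ω(y)` by quasi-closedness, and then `p ≪ ω(y)` by
invariance of `ω(y)`. Compactness of `ω(y)` gives a neighbourhood of `p` lying `≪ ω(y)`; the orbit
of `x` enters it, and the same two steps give `ω(x) ≤ ω(y)` and then `ω(x) ≪ ω(y)`.
-/

open Filter Topology Set

section OmegaLimit

variable {M : Type*} {φ : ℝ → M → M}

def omegaLimitSet [TopologicalSpace M] (φ : ℝ → M → M) (z : M) : Set M :=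
  ⋂ s ∈ {s : ℝ | 0 ≤ s}, closure {w : M | ∃ t : ℝ, s ≤ t ∧ w = φ t z}

theorem exists_flow_mem_of_mem_omegaLimitSet [TopologicalSpace M] {z c : M}
    (hc : c ∈ omegaLimitSet φ z) {U : Set M} (hU : IsOpen U) (hcU : c ∈ U) :
    ∃ t, 0 ≤ t ∧ φ t z ∈ U := by
  obtain ⟨_, hwU, t, ht, rfl⟩ := mem_closure_iff.1 (mem_iInter₂.1 hc 0 (le_refl (0 : ℝ))) U hU hcU
  exact ⟨t, ht, hwU⟩

theorem exists_tendsto_of_mem_omegaLimitSet [TopologicalSpace M] [FrechetUrysohnSpace M]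
    {z c : M} (hc : c ∈ omegaLimitSet φ z) (T : ℝ) :
    ∃ τ : ℕ → ℝ, (∀ n, T ≤ τ n) ∧ Tendsto (fun n => φ (τ n) z) atTop (𝓝 c) := by
  obtain ⟨w, hw, hwc⟩ :=
    mem_closure_iff_seq_limit.1 (mem_iInter₂.1 hc (max T 0) (le_max_right T 0))
  choose τ hτ hwτ using hw
  refine ⟨τ, fun n => (le_max_left T 0).trans (hτ n), ?_⟩
  simpa only [← funext hwτ] using hwc

end OmegaLimit

section Order

variable {M : Type*} {φ : ℝ → M → M} {le lt : M → M → Prop}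

theorem flow_eq_flow_sub_flow
    (hφadd : ∀ s t : ℝ, 0 ≤ s → 0 ≤ t → ∀ x, φ (s + t) x = φ s (φ t x))
    {s t : ℝ} (hs : 0 ≤ s) (hst : s ≤ t) (z : M) : φ t z = φ (t - s) (φ s z) := by
  simpa using hφadd (t - s) s (sub_nonneg.2 hst) hs z

theorem lt_flow_of_lt_of_flow_eq
    (hmono : ∀ x y, le x y → x ≠ y → ∀ t : ℝ, 0 < t → lt (φ t x) (φ t y))
    (hsub : ∀ x y, lt x y → le x y) {z w : M} {t : ℝ} (ht : 0 < t) (hz : φ t z = z)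
    (hzw : lt z w) : lt z (φ t w) := by
  by_cases hne : z = w
  · subst hne
    rwa [hz]
  · simpa only [hz] using hmono z w (hsub z w hzw) hne t ht

theorem flow_lt_of_forall_le_of_lt
    (hmono : ∀ x y, le x y → x ≠ y → ∀ t : ℝ, 0 < t → lt (φ t x) (φ t y))
    {S : Set M} (hinv : ∀ t : ℝ, 0 ≤ t → φ t '' S = S)
    (hnon : ∀ a b, a ∈ S → b ∈ S → le a b → a = b) {z q : M} (hle : ∀ b ∈ S, le z b)
    (hq : q ∈ S) (hzq : lt z q) {t : ℝ} (ht : 0 < t) {b : M} (hb : b ∈ S) :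
    lt (φ t z) b := by
  obtain ⟨b₁, hb₁, rfl⟩ : b ∈ φ t '' S := (hinv t ht.le).symm ▸ hb
  by_cases hne : z = b₁
  · -- `z ∈ S`: nonordering collapses `S` to the equilibrium `z`, and `hzq` becomes `lt z z`.
    subst hne
    obtain rfl := hnon z q hb₁ hq (hle q hq)
    rwa [← hnon z _ hb₁ hb (hle _ hb)]
  · exact hmono z b₁ (hle b₁ hb₁) hne t ht

theorem lt_flow_of_forall_le_of_lt
    (hmono : ∀ x y, le x y → x ≠ y → ∀ t : ℝ, 0 < t → lt (φ t x) (φ t y))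
    {S : Set M} (hinv : ∀ t : ℝ, 0 ≤ t → φ t '' S = S)
    (hnon : ∀ a b, a ∈ S → b ∈ S → le a b → a = b) {z q : M} (hle : ∀ a ∈ S, le a z)
    (hq : q ∈ S) (hqz : lt q z) {t : ℝ} (ht : 0 < t) {a : M} (ha : a ∈ S) :
    lt a (φ t z) :=
  flow_lt_of_forall_le_of_lt (le := fun u v => le v u) (lt := fun u v => lt v u)
    (fun u v huv hne t ht => hmono v u huv (Ne.symm hne) t ht) hinv
    (fun a b ha hb hab => (hnon b a hb ha hab).symm) hle hq hqz ht ha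

variable [TopologicalSpace M] [FrechetUrysohnSpace M]

theorem le_of_forall_lt_flow
    (hqc : ∀ (xs ys : ℕ → M) (a b : M), Tendsto xs atTop (𝓝 a) →
      Tendsto ys atTop (𝓝 b) → (∀ n, lt (xs n) (ys n)) → le a b)
    {w z : M} {T : ℝ} (h : ∀ t, T ≤ t → lt w (φ t z)) {b : M} (hb : b ∈ omegaLimitSet φ z) :
    le w b := by
  obtain ⟨τ, hτ, hτb⟩ := exists_tendsto_of_mem_omegaLimitSet hb T
  exact hqc _ _ w b tendsto_const_nhds hτb fun n => h _ (hτ n)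

theorem le_of_forall_flow_lt
    (hqc : ∀ (xs ys : ℕ → M) (a b : M), Tendsto xs atTop (𝓝 a) →
      Tendsto ys atTop (𝓝 b) → (∀ n, lt (xs n) (ys n)) → le a b)
    {w z : M} {T : ℝ} (h : ∀ t, T ≤ t → lt (φ t z) w) {a : M} (ha : a ∈ omegaLimitSet φ z) :
    le a w :=
  le_of_forall_lt_flow (le := fun u v => le v u) (lt := fun u v => lt v u)
    (fun xs ys a b hxs hys hlt => hqc ys xs b a hys hxs hlt) h ha

end Order

theorem exists_isOpen_forall_lt_of_isCompact {M : Type*} [TopologicalSpace M]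
    {lt : M → M → Prop}
    (hltopen : ∀ x y, lt x y → ∃ U V : Set M, IsOpen U ∧ IsOpen V ∧ x ∈ U ∧ y ∈ V ∧
      ∀ u ∈ U, ∀ v ∈ V, lt u v)
    {K : Set M} (hK : IsCompact K) {z : M} (hz : ∀ b ∈ K, lt z b) :
    ∃ W : Set M, IsOpen W ∧ z ∈ W ∧ ∀ u ∈ W, ∀ b ∈ K, lt u b := by
  have hopen : IsOpen {uv : M × M | lt uv.1 uv.2} := by
    refine isOpen_iff_forall_mem_open.2 fun uv huv => ?_
    obtain ⟨U, V, hU, hV, huU, hvV, hUV⟩ := hltopen uv.1 uv.2 huv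
    exact ⟨U ×ˢ V, fun ab hab => hUV _ hab.1 _ hab.2, hU.prod hV, huU, hvV⟩
  obtain ⟨W, V, hW, -, hzW, hKV, hWV⟩ := generalized_tube_lemma isCompact_singleton hK hopen
    (by rintro ⟨u, b⟩ ⟨rfl, hb⟩; exact hz b hb)
  exact ⟨W, hW, hzW rfl, fun u hu b hb => hWV (mk_mem_prod hu (hKV hb))⟩

theorem separation_lemma_equilibrium_general {M : Type*} [MetricSpace M]
    (φ : ℝ → M → M)
    (hφadd : ∀ s t : ℝ, 0 ≤ s → 0 ≤ t → ∀ x, φ (s + t) x = φ s (φ t x))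
    (le lt : M → M → Prop)
    (hsub : ∀ x y, lt x y → le x y)
    (hltopen : ∀ x y, lt x y → ∃ U V : Set M, IsOpen U ∧ IsOpen V ∧ x ∈ U ∧ y ∈ V ∧
      ∀ u ∈ U, ∀ v ∈ V, lt u v)
    (hmono : ∀ x y, le x y → x ≠ y → ∀ t : ℝ, 0 < t → lt (φ t x) (φ t y))
    (hqc : ∀ (xs ys : ℕ → M) (a b : M), Filter.Tendsto xs Filter.atTop (nhds a) →
      Filter.Tendsto ys Filter.atTop (nhds b) → (∀ n, lt (xs n) (ys n)) → le a b)
    (x y : M)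
    -- the omega-limit sets
    (ωx ωy : Set M)
    (hωx : ωx = ⋂ s ∈ {s : ℝ | 0 ≤ s}, closure {w : M | ∃ t : ℝ, s ≤ t ∧ w = φ t x})
    (hωy : ωy = ⋂ s ∈ {s : ℝ | 0 ≤ s}, closure {w : M | ∃ t : ℝ, s ≤ t ∧ w = φ t y})
    (hωycompact : IsCompact ωy)
    (hωxinv : ∀ t : ℝ, 0 ≤ t → φ t '' ωx = ωx)
    (hωyinv : ∀ t : ℝ, 0 ≤ t → φ t '' ωy = ωy)
    -- nonordering of omega-limit sets
    (hnonorder : ∀ z a b : M,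
      a ∈ ⋂ s ∈ {s : ℝ | 0 ≤ s}, closure {w : M | ∃ t : ℝ, s ≤ t ∧ w = φ t z} →
      b ∈ ⋂ s ∈ {s : ℝ | 0 ≤ s}, closure {w : M | ∃ t : ℝ, s ≤ t ∧ w = φ t z} →
      le a b → a = b)
    (p q : M) (hp : p ∈ ωx) (hq : q ∈ ωy) (hpq : lt p q)
    (hpeq : ∀ t : ℝ, 0 ≤ t → φ t p = p) :
    ∀ a ∈ ωx, ∀ b ∈ ωy, lt a b := by
  obtain rfl : ωx = omegaLimitSet φ x := hωx
  obtain rfl : ωy = omegaLimitSet φ y := hωy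
  obtain ⟨U, V, hU, hV, hpU, hqV, hUV⟩ := hltopen p q hpq
  obtain ⟨t₀, ht₀, hyV⟩ := exists_flow_mem_of_mem_omegaLimitSet hq hV hqV
  have hp_lt_orbit : ∀ t, t₀ + 1 ≤ t → lt p (φ t y) := fun t ht => by
    rw [flow_eq_flow_sub_flow hφadd ht₀ (by linarith) y]
    exact lt_flow_of_lt_of_flow_eq hmono hsub (by linarith) (hpeq _ (by linarith))
      (hUV p hpU _ hyV)
  have hp_le : ∀ b ∈ omegaLimitSet φ y, le p b := fun b hb =>
    le_of_forall_lt_flow hqc hp_lt_orbit hb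
  have hp_lt : ∀ b ∈ omegaLimitSet φ y, lt p b := fun b hb => by
    simpa only [hpeq 1 zero_le_one] using
      flow_lt_of_forall_le_of_lt hmono hωyinv (hnonorder y) hp_le hq hpq one_pos hb
  obtain ⟨W, hW, hpW, hWlt⟩ := exists_isOpen_forall_lt_of_isCompact hltopen hωycompact hp_lt
  obtain ⟨t₁, ht₁, hxW⟩ := exists_flow_mem_of_mem_omegaLimitSet hp hW hpW
  have hx_lt : ∀ b ∈ omegaLimitSet φ y, ∀ t, t₁ + 1 ≤ t → lt (φ t x) b := fun b hb t ht => by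
    rw [flow_eq_flow_sub_flow hφadd ht₁ (by linarith) x]
    exact flow_lt_of_forall_le_of_lt hmono hωyinv (hnonorder y)
      (fun b hb => hsub _ _ (hWlt _ hxW b hb)) hq (hWlt _ hxW q hq) (by linarith) hb
  intro a ha b hb
  obtain ⟨b₁, hb₁, rfl⟩ : b ∈ φ 1 '' omegaLimitSet φ y := (hωyinv 1 zero_le_one).symm ▸ hb
  exact lt_flow_of_forall_le_of_lt hmono hωxinv (hnonorder x)
    (fun a ha => le_of_forall_flow_lt hqc (hx_lt b₁ hb₁) ha) hp (hp_lt b₁ hb₁) one_pos ha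

/-- Separation lemma (equilibrium case): if `x ≤ y`, `p ∈ ω(x)`, `q ∈ ω(y)`,
`p ≪ q`, and `p` is an equilibrium, then `ω(x) ≪ ω(y)` pointwise. -/
theorem separation_lemma_equilibrium {M : Type*} [MetricSpace M] [CompleteSpace M]
    (φ : ℝ → M → M)
    (hcont : Continuous fun p : ℝ × M => φ p.1 p.2)
    (hφ0 : ∀ x, φ 0 x = x)
    (hφadd : ∀ s t : ℝ, 0 ≤ s → 0 ≤ t → ∀ x, φ (s + t) x = φ s (φ t x))
    (le lt : M → M → Prop)
    (hrefl : ∀ x, le x x) (hletrans : ∀ x y z, le x y → le y z → le x z)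
    (hantisymm : ∀ x y, le x y → le y x → x = y)
    (hsub : ∀ x y, lt x y → le x y)
    (hlttrans : ∀ x y z, lt x y → lt y z → lt x z)
    (hltle : ∀ x y z, lt x y → le y z → lt x z)
    (hlelt : ∀ x y z, le x y → lt y z → lt x z)
    (hltopen : ∀ x y, lt x y → ∃ U V : Set M, IsOpen U ∧ IsOpen V ∧ x ∈ U ∧ y ∈ V ∧
      ∀ u ∈ U, ∀ v ∈ V, lt u v)
    (hmono : ∀ x y, le x y → x ≠ y → ∀ t : ℝ, 0 < t → lt (φ t x) (φ t y))
    (hqc : ∀ (xs ys : ℕ → M) (a b : M), Filter.Tendsto xs Filter.atTop (nhds a) →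
      Filter.Tendsto ys Filter.atTop (nhds b) → (∀ n, lt (xs n) (ys n)) → le a b)
    (x y : M) (hxy : le x y)
    (horbx : IsCompact (closure {w : M | ∃ t : ℝ, 0 ≤ t ∧ w = φ t x}))
    (horby : IsCompact (closure {w : M | ∃ t : ℝ, 0 ≤ t ∧ w = φ t y}))
    -- the omega-limit sets
    (ωx ωy : Set M)
    (hωx : ωx = ⋂ s ∈ {s : ℝ | 0 ≤ s}, closure {w : M | ∃ t : ℝ, s ≤ t ∧ w = φ t x})
    (hωy : ωy = ⋂ s ∈ {s : ℝ | 0 ≤ s}, closure {w : M | ∃ t : ℝ, s ≤ t ∧ w = φ t y})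
    (hωxcompact : IsCompact ωx) (hωycompact : IsCompact ωy)
    (hωxinv : ∀ t : ℝ, 0 ≤ t → φ t '' ωx = ωx)
    (hωyinv : ∀ t : ℝ, 0 ≤ t → φ t '' ωy = ωy)
    -- nonordering of omega-limit sets
    (hnonorder : ∀ z a b : M,
      a ∈ ⋂ s ∈ {s : ℝ | 0 ≤ s}, closure {w : M | ∃ t : ℝ, s ≤ t ∧ w = φ t z} →
      b ∈ ⋂ s ∈ {s : ℝ | 0 ≤ s}, closure {w : M | ∃ t : ℝ, s ≤ t ∧ w = φ t z} →
      le a b → a = b)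
    (p q : M) (hp : p ∈ ωx) (hq : q ∈ ωy) (hpq : lt p q)
    (hpeq : ∀ t : ℝ, 0 ≤ t → φ t p = p) :
    ∀ a ∈ ωx, ∀ b ∈ ωy, lt a b :=
  separation_lemma_equilibrium_general φ hφadd le lt hsub hltopen hmono hqc x y ωx ωy hωx hωy
    hωycompact hωxinv hωyinv hnonorder p q hp hq hpq hpeq
end

section
/- Equivalence of monotonicity and differential positivity in ℝⁿ: let φ_t be the flow of a C¹ vector field f on ℝⁿ and C a closed convex cone. Then φ is monotone with respect to the order induced by C (x ≤ y ⟹ φ_t(x) ≤ φ_t(y) for all t ≥ 0, where x ≤ y means y − x ∈ C) if and only if the derivative dφ_t(x) maps C into C for every x ∈ ℝⁿ and t ≥ 0. -/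
/-!
Fix `t`. If `x ≤ y` implies `φ t x ≤ φ t y`, then for `v ∈ C` the difference quotients
`(φ t (x + s • v) - φ t x) / s`, `s > 0`, lie in `C`, and so does their limit `dφ_t(x) v`
because `C` is closed. Conversely, by Farkas' lemma it suffices that `ℓ (φ t y - φ t x) ≥ 0` for
every continuous functional `ℓ` nonnegative on `C`; the real function
`s ↦ ℓ (φ t (x + s • (y - x)))` has derivative `ℓ (dφ_t(x + s • (y - x)) (y - x)) ≥ 0`,
hence is monotone.
-/

namespace ProperCone

variable {E : Type*} [TopologicalSpace E] [AddCommGroup E] [Module ℝ E]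

def ofIsClosed (C : Set E) (hne : C.Nonempty) (hclosed : IsClosed C)
    (hadd : ∀ a ∈ C, ∀ b ∈ C, a + b ∈ C) (hsmul : ∀ r : ℝ, 0 ≤ r → ∀ a ∈ C, r • a ∈ C) :
    ProperCone ℝ E where
  carrier := C
  add_mem' ha hb := hadd _ ha _ hb
  zero_mem' := by
    obtain ⟨a, ha⟩ := hne
    simpa using hsmul 0 le_rfl a ha
  smul_mem' c _ ha := hsmul c c.2 _ ha
  isClosed' := hclosed

end ProperCone

variable {E F : Type*} [NormedAddCommGroup E] [NormedSpace ℝ E]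
  [NormedAddCommGroup F] [NormedSpace ℝ F]

theorem HasFDerivAt.apply_mem_of_forall_sub_mem (K : ProperCone ℝ F) {g : E → F}
    {g' : E →L[ℝ] F} {x v : E} (hg : HasFDerivAt g g' x)
    (hmem : ∀ s : ℝ, 0 < s → g (x + s • v) - g x ∈ K) : g' v ∈ K := by
  refine K.isClosed.mem_of_tendsto (hg.hasLineDerivAt v).tendsto_slope_zero_right ?_
  filter_upwards [self_mem_nhdsWithin] with s (hs : 0 < s)
  exact K.smul_mem (hmem s hs) (inv_nonneg.mpr hs.le)

theorem sub_mem_of_forall_hasFDerivAt_apply_mem (K : ProperCone ℝ F) {g : E → F}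
    {g' : E → E →L[ℝ] F} (hg : ∀ z, HasFDerivAt g (g' z) z) {x y : E}
    (hmem : ∀ z, g' z (y - x) ∈ K) : g y - g x ∈ K := by
  by_contra hnot
  obtain ⟨ℓ, hℓK, hℓ⟩ := K.hyperplane_separation_point hnot
  have hderiv : ∀ s : ℝ, HasDerivAt (fun s => ℓ (g (x + s • (y - x))))
      (ℓ (g' (x + s • (y - x)) (y - x))) s := by
    intro s
    have hline : HasDerivAt (fun s : ℝ => x + s • (y - x)) (y - x) s := by
      simpa using ((hasDerivAt_id s).smul_const (y - x)).const_add x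
    exact ℓ.hasFDerivAt.comp_hasDerivAt s ((hg _).comp_hasDerivAt s hline)
  have hmono : ℓ (g x) ≤ ℓ (g y) := by
    simpa using monotone_of_hasDerivAt_nonneg hderiv (fun s => hℓK _ (hmem _)) zero_le_one
  rw [map_sub] at hℓ
  linarith

theorem forall_sub_mem_iff_forall_fderiv_apply_mem (K : ProperCone ℝ E) (L : ProperCone ℝ F)
    {g : E → F} {g' : E → E →L[ℝ] F} (hg : ∀ z, HasFDerivAt g (g' z) z) :
    (∀ x y, y - x ∈ K → g y - g x ∈ L) ↔ ∀ x, ∀ v ∈ K, g' x v ∈ L := by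
  refine ⟨fun hmono x v hv => (hg x).apply_mem_of_forall_sub_mem L fun s hs => ?_,
    fun hpos x y hxy => sub_mem_of_forall_hasFDerivAt_apply_mem L hg fun z => hpos z _ hxy⟩
  exact hmono _ _ (by simpa using K.smul_mem hv hs.le)

theorem monotone_iff_differentially_positive_general {n : ℕ}
    (C : Set (EuclideanSpace ℝ (Fin n)))
    (hclosed : IsClosed C) (hadd : ∀ a ∈ C, ∀ b ∈ C, a + b ∈ C)
    (hsmul : ∀ r : ℝ, 0 ≤ r → ∀ a ∈ C, r • a ∈ C)
    (φ : ℝ → EuclideanSpace ℝ (Fin n) → EuclideanSpace ℝ (Fin n))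
    (D : ℝ → EuclideanSpace ℝ (Fin n) →
      (EuclideanSpace ℝ (Fin n) →L[ℝ] EuclideanSpace ℝ (Fin n)))
    (hD : ∀ t : ℝ, 0 ≤ t → ∀ x, HasFDerivAt (φ t) (D t x) x) :
    (∀ x y : EuclideanSpace ℝ (Fin n), y - x ∈ C →
        ∀ t : ℝ, 0 ≤ t → φ t y - φ t x ∈ C) ↔
      (∀ x : EuclideanSpace ℝ (Fin n), ∀ t : ℝ, 0 ≤ t → ∀ v ∈ C, D t x v ∈ C) := by
  rcases C.eq_empty_or_nonempty with rfl | hne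
  · simp
  let K := ProperCone.ofIsClosed C hne hclosed hadd hsmul
  have hslice : ∀ t, 0 ≤ t →
      ((∀ x y, y - x ∈ C → φ t y - φ t x ∈ C) ↔ ∀ x, ∀ v ∈ C, D t x v ∈ C) :=
    fun t ht => forall_sub_mem_iff_forall_fderiv_apply_mem K K (hD t ht)
  exact ⟨fun hmono x t ht => (hslice t ht).1 (fun x y hxy => hmono x y hxy t ht) x,
    fun hpos x y hxy t ht => (hslice t ht).2 (fun x => hpos x t ht) x y hxy⟩

/-- Equivalence of monotonicity and differential positivity in `ℝⁿ`: the flow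
`φ_t` of a `C¹` vector field `f` is monotone with respect to the order induced by
a closed convex cone `C` iff its derivative `dφ_t(x)` maps `C` into `C` for every
`x` and `t ≥ 0`. -/
theorem monotone_iff_differentially_positive {n : ℕ}
    (C : Set (EuclideanSpace ℝ (Fin n)))
    (hclosed : IsClosed C) (hadd : ∀ a ∈ C, ∀ b ∈ C, a + b ∈ C)
    (hsmul : ∀ r : ℝ, 0 ≤ r → ∀ a ∈ C, r • a ∈ C)
    (f : EuclideanSpace ℝ (Fin n) → EuclideanSpace ℝ (Fin n))
    (hf : ContDiff ℝ 1 f)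
    (φ : ℝ → EuclideanSpace ℝ (Fin n) → EuclideanSpace ℝ (Fin n))
    (hφ0 : ∀ x, φ 0 x = x)
    (hflow : ∀ x : EuclideanSpace ℝ (Fin n), ∀ t : ℝ,
      HasDerivAt (fun s => φ s x) (f (φ t x)) t)
    (D : ℝ → EuclideanSpace ℝ (Fin n) →
      (EuclideanSpace ℝ (Fin n) →L[ℝ] EuclideanSpace ℝ (Fin n)))
    (hD : ∀ t : ℝ, 0 ≤ t → ∀ x, HasFDerivAt (φ t) (D t x) x)
    (hDcont : ∀ t : ℝ, 0 ≤ t → Continuous (D t)) :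
    (∀ x y : EuclideanSpace ℝ (Fin n), y - x ∈ C →
        ∀ t : ℝ, 0 ≤ t → φ t y - φ t x ∈ C) ↔
      (∀ x : EuclideanSpace ℝ (Fin n), ∀ t : ℝ, 0 ≤ t → ∀ v ∈ C, D t x v ∈ C) :=
  monotone_iff_differentially_positive_general C hclosed hadd hsmul φ D hD
end

section
/- Monotone convergence along a discrete orbit: let M be a complete metric space with a quasi-closed partial order ≤ and open strict relation ≪ ⊆ ≤. If a sequence (xₙ) satisfies xₙ ≪ xₙ₊₁ for all n and lies in a compact set, then (xₙ) converges: every two subsequential limits p, q satisfy p ≤ q and q ≤ p, hence p = q. -/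
/-- Monotone convergence along a discrete orbit: in a complete metric space with a
quasi-closed partial order `≤` and a transitive relation `≪ ⊆ ≤`, a sequence with
`xₙ ≪ xₙ₊₁` lying in a compact set converges. -/
theorem monotone_discrete_orbit_converges {M : Type*} [MetricSpace M] [CompleteSpace M]
    (le lt : M → M → Prop)
    (hrefl : ∀ x, le x x) (hletrans : ∀ x y z, le x y → le y z → le x z)
    (hantisymm : ∀ x y, le x y → le y x → x = y)
    (hsub : ∀ x y, lt x y → le x y)
    (hlttrans : ∀ x y z, lt x y → lt y z → lt x z)
    (hqc : ∀ (as bs : ℕ → M) (a b : M), Filter.Tendsto as Filter.atTop (nhds a) →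
      Filter.Tendsto bs Filter.atTop (nhds b) → (∀ n, lt (as n) (bs n)) → le a b)
    (x : ℕ → M) (hmono : ∀ n, lt (x n) (x (n + 1)))
    (K : Set M) (hK : IsCompact K) (hxK : ∀ n, x n ∈ K) :
    ∃ p : M, Filter.Tendsto x Filter.atTop (nhds p) := by
  -- the chain property
  have hchain : ∀ i j : ℕ, i < j → lt (x i) (x j) := by
    intro i j hij
    induction j with
    | zero => omega
    | succ j ih =>
      rcases Nat.lt_succ_iff_lt_or_eq.mp hij with h | h
      · exact hlttrans _ _ _ (ih h) (hmono j)
      · exact h ▸ hmono i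
  -- any two limits along sequences of indices tending to atTop satisfy `le`
  have key : ∀ (u v : ℕ → ℕ) (a b : M), Filter.Tendsto v Filter.atTop Filter.atTop →
      Filter.Tendsto (fun n => x (u n)) Filter.atTop (nhds a) →
      Filter.Tendsto (fun n => x (v n)) Filter.atTop (nhds b) → le a b := by
    intro u v a b hv ha hb
    obtain ⟨k, hkmono, hk⟩ := Filter.extraction_forall_of_eventually
      (P := fun n m => u n < v m) (fun n => hv.eventually_gt_atTop (u n))
    exact hqc (fun n => x (u n)) (fun n => x (v (k n))) a b ha
      (hb.comp hkmono.tendsto_atTop) (fun n => hchain _ _ (hk n))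
  obtain ⟨p, -, φ, hφ, hφp⟩ := hK.tendsto_subseq hxK
  refine ⟨p, Filter.tendsto_of_subseq_tendsto fun ns hns => ?_⟩
  obtain ⟨q, -, ψ, hψ, hψq⟩ := hK.tendsto_subseq (x := fun n => x (ns n)) (fun n => hxK _)
  have h1 : le p q := key φ (ns ∘ ψ) p q (hns.comp hψ.tendsto_atTop) hφp hψq
  have h2 : le q p := key (ns ∘ ψ) φ q p hφ.tendsto_atTop hψq hφp
  exact ⟨ψ, (hantisymm _ _ h1 h2) ▸ hψq⟩
end

section
/- Rigid rotation density argument: let φ be a flow, γ a periodic orbit of minimal period T₁ > 0 through p, and ≪ a transitive relation preserved by the flow (a ≪ b ⟹ φ_t(a) ≪ φ_t(b) for t ≥ 0) and quasi-closed. Suppose q satisfies φ_{T₂}(q) = q for some T₂ > 0 with T₂/T₁ irrational, and φ_ε(p) ≪ q for all ε ∈ [0, ε₀] with ε₀ > 0. Then the set {φ_{nT₂}(φ_ε(p)) : n ∈ ℕ} is dense in the orbit γ, and consequently z ≤ q for every z ∈ γ, where ≤ is the quasi-closed order containing ≪. -/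
/-!
The orbit of a point of period `T₁` is the continuous image of the circle `ℝ ⧸ T₁ℤ`, and on that
circle the flow for time `T₂` is the rotation by `T₂`, which is irrational and hence has dense
forward orbits. So the points `φ_{nT₂}(φ_ε(p))` are dense in the orbit. Since `q` is fixed by
`φ_{T₂}`, preservation of `≪` turns `p ≪ q` into `φ_{nT₂}(p) ≪ q` for all `n`, and quasi-closedness
passes this to the limit points, which exhaust the orbit.
-/

open Set Filter Topology

namespace Flow

variable {M : Type*} [TopologicalSpace M] (ϕ : Flow ℝ M)

theorem periodic_apply_of_apply_eq {T : ℝ} {p : M} (hp : ϕ T p = p) :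
    Function.Periodic (ϕ · p) T := fun t => by
  simp only [map_add, hp]

theorem apply_nat_mul_eq_self {T : ℝ} {q : M} (hq : ϕ T q = q) (n : ℕ) : ϕ (n * T) q = q := by
  simpa only [zero_add, map_zero_apply] using (ϕ.periodic_apply_of_apply_eq hq).nat_mul n 0

theorem range_subset_closure_range_nat_mul {T₁ T₂ : ℝ} (hT₁ : 0 < T₁)
    (hirr : Irrational (T₂ / T₁)) {p : M} (hp : ϕ T₁ p = p) (ε : ℝ) :
    range (ϕ · p) ⊆ closure (range fun n : ℕ => ϕ (n * T₂) (ϕ ε p)) := by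
  have : Fact (0 < T₁) := ⟨hT₁⟩
  let F : AddCircle T₁ → M := (ϕ.periodic_apply_of_apply_eq hp).lift
  have hF : Continuous F :=
    (ϕ.continuous continuous_id continuous_const).quotient_lift _
  have hrotation : DenseRange fun n : ℕ => (ε : AddCircle T₁) + n • (T₂ : AddCircle T₁) :=
    (Homeomorph.addLeft (ε : AddCircle T₁)).surjective.denseRange.comp
      (denseRange_zsmul_iff_nsmul.1 (AddCircle.denseRange_zsmul_coe_iff.2 hirr))
      (Homeomorph.addLeft _).continuous
  rintro _ ⟨t, rfl⟩
  refine closure_mono ?_ (hF.range_subset_closure_image_dense hrotation ⟨t, rfl⟩)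
  rintro _ ⟨_, ⟨n, rfl⟩, rfl⟩
  refine ⟨n, ?_⟩
  dsimp only
  rw [← AddCircle.coe_nsmul, ← AddCircle.coe_add, nsmul_eq_mul, ← map_add, add_comm]
  exact ((ϕ.periodic_apply_of_apply_eq hp).lift_coe _).symm

end Flow

theorem le_of_mem_closure_of_forall_lt {M : Type*} [TopologicalSpace M] [FrechetUrysohnSpace M]
    {le lt : M → M → Prop}
    (hqc : ∀ (as bs : ℕ → M) (a b : M), Tendsto as atTop (𝓝 a) →
      Tendsto bs atTop (𝓝 b) → (∀ n, lt (as n) (bs n)) → le a b)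
    {s : Set M} {z q : M} (hs : ∀ x ∈ s, lt x q) (hz : z ∈ closure s) : le z q := by
  obtain ⟨u, hus, hu⟩ := mem_closure_iff_seq_limit.1 hz
  exact hqc u (fun _ => q) z q hu tendsto_const_nhds fun n => hs _ (hus n)

theorem rigid_rotation_density_general {M : Type*} [MetricSpace M]
    (φ : ℝ → M → M)
    (hcont : Continuous fun a : ℝ × M => φ a.1 a.2)
    (hφ0 : ∀ x, φ 0 x = x)
    (hφadd : ∀ s t : ℝ, ∀ x, φ (s + t) x = φ s (φ t x))
    (le lt : M → M → Prop)
    (hpres : ∀ a b, lt a b → ∀ t : ℝ, 0 ≤ t → lt (φ t a) (φ t b))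
    (hqc : ∀ (as bs : ℕ → M) (a b : M), Filter.Tendsto as Filter.atTop (nhds a) →
      Filter.Tendsto bs Filter.atTop (nhds b) → (∀ n, lt (as n) (bs n)) → le a b)
    (p q : M) (T₁ T₂ : ℝ) (hT₁ : 0 < T₁) (hT₂ : 0 < T₂)
    (hperiodic : φ T₁ p = p)
    (hqfix : φ T₂ q = q)
    (hirr : Irrational (T₂ / T₁))
    (ε₀ : ℝ) (hε₀ : 0 < ε₀)
    (hlt : ∀ ε ∈ Set.Icc 0 ε₀, lt (φ ε p) q) :
    (∀ ε ∈ Set.Icc 0 ε₀,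
      {z : M | ∃ t : ℝ, z = φ t p} ⊆
        closure {z : M | ∃ n : ℕ, z = φ ((n : ℝ) * T₂) (φ ε p)}) ∧
    (∀ z : M, (∃ t : ℝ, z = φ t p) → le z q) := by
  let Φ : Flow ℝ M := ⟨φ, hcont, hφadd, hφ0⟩
  have hdense : ∀ ε : ℝ, {z : M | ∃ t : ℝ, z = φ t p} ⊆
      closure {z : M | ∃ n : ℕ, z = φ ((n : ℝ) * T₂) (φ ε p)} := fun ε => by
    simpa only [Set.range, eq_comm] using Φ.range_subset_closure_range_nat_mul hT₁ hirr hperiodic ε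
  refine ⟨fun ε _ => hdense ε, fun z hz => ?_⟩
  have hp_lt : lt (φ 0 p) q := hlt 0 ⟨le_rfl, hε₀.le⟩
  refine le_of_mem_closure_of_forall_lt hqc (fun x hx => ?_) (hdense 0 hz)
  obtain ⟨n, rfl⟩ := hx
  have hq : φ (n * T₂) q = q := Φ.apply_nat_mul_eq_self hqfix n
  simpa only [hφ0, hq] using hpres _ _ hp_lt (n * T₂) (by positivity)

/-- Rigid rotation density argument: if `γ` is a periodic orbit of minimal period
`T₁ > 0` through `p`, `q` is fixed by `φ_{T₂}` with `T₂/T₁` irrational, and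
`φ_ε(p) ≪ q` for all `ε ∈ [0, ε₀]`, then `{φ_{nT₂}(φ_ε(p)) : n ∈ ℕ}` is dense in
`γ`, and `z ≤ q` for every `z ∈ γ`. -/
theorem rigid_rotation_density {M : Type*} [MetricSpace M]
    (φ : ℝ → M → M)
    (hcont : Continuous fun a : ℝ × M => φ a.1 a.2)
    (hφ0 : ∀ x, φ 0 x = x)
    (hφadd : ∀ s t : ℝ, ∀ x, φ (s + t) x = φ s (φ t x))
    (le lt : M → M → Prop)
    (hrefl : ∀ x, le x x) (hletrans : ∀ x y z, le x y → le y z → le x z)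
    (hsub : ∀ x y, lt x y → le x y)
    (hlttrans : ∀ x y z, lt x y → lt y z → lt x z)
    (hpres : ∀ a b, lt a b → ∀ t : ℝ, 0 ≤ t → lt (φ t a) (φ t b))
    (hqc : ∀ (as bs : ℕ → M) (a b : M), Filter.Tendsto as Filter.atTop (nhds a) →
      Filter.Tendsto bs Filter.atTop (nhds b) → (∀ n, lt (as n) (bs n)) → le a b)
    (p q : M) (T₁ T₂ : ℝ) (hT₁ : 0 < T₁) (hT₂ : 0 < T₂)
    (hperiodic : φ T₁ p = p)
    (hminimal : ∀ t : ℝ, 0 < t → t < T₁ → φ t p ≠ p)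
    (hqfix : φ T₂ q = q)
    (hirr : Irrational (T₂ / T₁))
    (ε₀ : ℝ) (hε₀ : 0 < ε₀)
    (hlt : ∀ ε ∈ Set.Icc 0 ε₀, lt (φ ε p) q) :
    (∀ ε ∈ Set.Icc 0 ε₀,
      {z : M | ∃ t : ℝ, z = φ t p} ⊆
        closure {z : M | ∃ n : ℕ, z = φ ((n : ℝ) * T₂) (φ ε p)}) ∧
    (∀ z : M, (∃ t : ℝ, z = φ t p) → le z q) :=
  rigid_rotation_density_general φ hcont hφ0 hφadd le lt hpres hqc p q T₁ T₂ hT₁ hT₂ hperiodic hqfix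
    hirr ε₀ hε₀ hlt
end
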